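/- For every interior initial point x ∈ S² with all coordinates strictly positive and x ≠ c, the orbit of the zero-sum replicator map R_H approaches the boundary of the simplex: ξ(R_H^{(n)}(x)) → 0 as n → ∞, where ξ(x) = x_1 x_2 x_3; equivalently, the omega-limit set ω(x) of the orbit is contained in the boundary ∂S² = {x ∈ S² : x_1 x_2 x_3 = 0}. Moreover ω(x) is an infinite set. -/

import Mathlib

open Filter Topology

/-- The two-dimensional standard simplex `S²` in `ℝ³`. -/
def simplex2 : Set (Fin 3 → ℝ) :=
  {x | (∀ k, 0 ≤ x k) ∧ x 0 + x 1 + x 2 = 1}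

/-- The part `B³_+` of the unit `l_1`-ball lying in the positive orthant of `ℝ³`. -/
def ball3 : Set (Fin 3 → ℝ) :=
  {x | (∀ k, 0 ≤ x k) ∧ x 0 + x 1 + x 2 ≤ 1}

/-!
The product `ξ y = y 0 * y 1 * y 2` is a strict Lyapunov function off the centre:
`ξ (R y) = ξ y * ∏ i, growthFactor F y i`, and the factors sum to
`3 + ∑ i, F y i * (y (i + 1) - y i)`, which is `< 3` by the rearrangement inequality because `F y`
is ordered like `y`; AM-GM then bounds the product by `1`. Hence `ξ` decreases along the orbit to
some `L`. A limit point `p` and its image `R p` are both limit points, so `ξ p = ξ (R p) = L`, which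
forces `L = 0`.

Near the vertex `e j` the coordinate `j + 2` grows geometrically, and one step cannot carry the
orbit from near one vertex to near another, so some limit point is not a vertex, i.e. lies on an
open edge. There one coordinate increases strictly, so the forward orbit of that point is infinite,
and it consists of limit points.
-/

open Set Function

theorem mul_mul_le_avg_pow_three {u v w : ℝ} (hu : 0 ≤ u) (hv : 0 ≤ v) (hw : 0 ≤ w) :
    u * v * w ≤ ((u + v + w) / 3) ^ 3 := by
  nlinarith [mul_nonneg hu (sq_nonneg (v - w)), mul_nonneg hv (sq_nonneg (u - w)),
    mul_nonneg hw (sq_nonneg (u - v)),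
    mul_nonneg (add_nonneg (add_nonneg hu hv) hw)
      (add_nonneg (add_nonneg (sq_nonneg (u - v)) (sq_nonneg (v - w))) (sq_nonneg (u - w)))]

theorem cyclic_sum_neg_of_le_of_le {a b c A B C : ℝ} (hab : a ≤ b) (hbc : b ≤ c) (hac : a ≠ c)
    (hAB : A ≤ B) (hBC : B ≤ C) (hAB' : a < b → A < B) (hBC' : b < c → B < C) :
    A * (b - a) + B * (c - b) + C * (a - c) < 0 ∧ A * (c - a) + B * (a - b) + C * (b - c) < 0 := by
  rcases hab.lt_or_eq with hab | rfl
  · constructor <;> nlinarith [mul_pos (sub_pos.2 (hAB' hab)) (sub_pos.2 hab)]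
  · have hbc := lt_of_le_of_ne hbc hac
    constructor <;> nlinarith [mul_pos (sub_pos.2 (hBC' hbc)) (sub_pos.2 hbc)]

-- The strict rearrangement inequality for the cyclic shift of three points.
theorem cyclic_sum_neg {f g : Fin 3 → ℝ} (hfg : ∀ i j, f i ≤ f j ↔ g i ≤ g j)
    (hg : ¬(g 0 = g 1 ∧ g 1 = g 2)) :
    f 0 * (g 1 - g 0) + f 1 * (g 2 - g 1) + f 2 * (g 0 - g 2) < 0 := by
  have hlt : ∀ i j, g i < g j → f i < f j := fun i j => by
    simpa only [not_le] using (hfg j i).not.2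
  have key := fun i j k (hij : g i ≤ g j) (hjk : g j ≤ g k) (hik : g i ≠ g k) =>
    cyclic_sum_neg_of_le_of_le hij hjk hik ((hfg i j).2 hij) ((hfg j k).2 hjk) (hlt i j) (hlt j k)
  rcases le_total (g 0) (g 1) with h01 | h10 <;> rcases le_total (g 1) (g 2) with h12 | h21
  · linarith [(key 0 1 2 h01 h12 fun h => hg ⟨by linarith, by linarith⟩).1]
  · rcases le_total (g 0) (g 2) with h02 | h20
    · linarith [(key 0 2 1 h02 h21 fun h => hg ⟨by linarith, by linarith⟩).2]
    · linarith [(key 2 0 1 h20 h01 fun h => hg ⟨by linarith, by linarith⟩).1]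
  · rcases le_total (g 0) (g 2) with h02 | h20
    · linarith [(key 1 0 2 h10 h02 fun h => hg ⟨by linarith, by linarith⟩).2]
    · linarith [(key 1 2 0 h12 h20 fun h => hg ⟨by linarith, by linarith⟩).1]
  · linarith [(key 2 1 0 h21 h10 fun h => hg ⟨by linarith, by linarith⟩).2]

section SubseqLimits

variable {X : Type*} [TopologicalSpace X]

def subseqLimits (u : ℕ → X) : Set X :=
  {p | ∃ φ : ℕ → ℕ, StrictMono φ ∧ Tendsto (u ∘ φ) atTop (𝓝 p)}

theorem subseqLimits_subset_of_isClosed {u : ℕ → X} {S : Set X} (hS : IsClosed S)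
    (hu : ∀ n, u n ∈ S) : subseqLimits u ⊆ S := by
  rintro p ⟨φ, -, hφ⟩
  exact hS.mem_of_tendsto hφ (Eventually.of_forall fun n => hu (φ n))

theorem apply_eq_of_mem_subseqLimits {Y : Type*} [TopologicalSpace Y] [T2Space Y] {u : ℕ → X}
    {V : X → Y} {L : Y} {p : X} (hV : ContinuousAt V p) (hL : Tendsto (V ∘ u) atTop (𝓝 L))
    (hp : p ∈ subseqLimits u) : V p = L := by
  obtain ⟨φ, hφ, hup⟩ := hp
  exact tendsto_nhds_unique (hV.tendsto.comp hup) (hL.comp hφ.tendsto_atTop)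

theorem apply_mem_subseqLimits_iterate {g : X → X} {x p : X} {S : Set X} (hS : IsClosed S)
    (hg : ContinuousOn g S) (hx : ∀ n, g^[n] x ∈ S) (hp : p ∈ subseqLimits (g^[·] x)) :
    g p ∈ subseqLimits (g^[·] x) := by
  obtain ⟨φ, hφ, hup⟩ := hp
  have hpS : p ∈ S := hS.mem_of_tendsto hup (Eventually.of_forall fun n => hx (φ n))
  refine ⟨(· + 1) ∘ φ, (strictMono_id.add_const 1).comp hφ, ?_⟩
  have := (hg p hpS).tendsto.comp
    (tendsto_nhdsWithin_iff.2 ⟨hup, Eventually.of_forall fun n => hx (φ n)⟩)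
  simpa only [comp_def, iterate_succ_apply'] using this

theorem eventually_mem_of_subseqLimits_subset [FirstCountableTopology X] {u : ℕ → X}
    {S U : Set X} (hS : IsCompact S) (hu : ∀ n, u n ∈ S) (hU : IsOpen U)
    (hsub : subseqLimits u ⊆ U) : ∀ᶠ n in atTop, u n ∈ U := by
  by_contra h
  obtain ⟨φ, hφ, hφU⟩ := extraction_of_frequently_atTop (not_eventually.1 h)
  obtain ⟨p, -, ψ, hψ, hp⟩ := hS.tendsto_subseq fun n => hu (φ n)
  have hpU : p ∉ U := hU.isClosed_compl.mem_of_tendsto hp (Eventually.of_forall fun n => hφU (ψ n))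
  exact hpU (hsub ⟨φ ∘ ψ, hφ.comp hψ, hp⟩)

theorem IsCompact.exists_pos_forall_le {ι : Type*} [Fintype ι] [Nonempty ι] {S : Set X}
    (hS : IsCompact S) {f : X → ι → ℝ} (hf : ∀ i, ContinuousOn (fun x => f x i) S)
    (hpos : ∀ x ∈ S, ∀ i, 0 < f x i) : ∃ δ > 0, ∀ x ∈ S, ∀ i, δ ≤ f x i := by
  obtain ⟨δ, hδ, hle⟩ := hS.exists_forall_le'
    (ContinuousOn.finset_inf'_apply Finset.univ_nonempty fun i _ => hf i)
    (fun x hx => (Finset.lt_inf'_iff _).2 fun i _ => hpos x hx i)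
  exact ⟨δ, hδ, fun x hx i => (hle x hx).trans (Finset.inf'_le _ (Finset.mem_univ i))⟩

end SubseqLimits

theorem Fin3.add_one_ne (j : Fin 3) : j + 1 ≠ j := by revert j; decide

theorem Fin3.add_two_ne (j : Fin 3) : j + 2 ≠ j := by revert j; decide

theorem Fin3.add_one_add_one (j : Fin 3) : j + 1 + 1 = j + 2 := by revert j; decide

theorem Fin3.add_one_add_two (j : Fin 3) : j + 1 + 2 = j := by revert j; decide

theorem Fin3.add_two_add_one (j : Fin 3) : j + 2 + 1 = j := by revert j; decide

theorem Fin3.add_two_add_two (j : Fin 3) : j + 2 + 2 = j + 1 := by revert j; decide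

section Simplex

def coordProd (y : Fin 3 → ℝ) : ℝ := y 0 * y 1 * y 2

def posSimplex2 : Set (Fin 3 → ℝ) := {y ∈ simplex2 | ∀ k, 0 < y k}

def simplex2Edge (j : Fin 3) : Set (Fin 3 → ℝ) :=
  {y ∈ simplex2 | y j = 0 ∧ 0 < y (j + 1) ∧ 0 < y (j + 2)}

theorem continuous_coordProd : Continuous coordProd := by
  unfold coordProd; fun_prop

theorem coordProd_pos {y : Fin 3 → ℝ} (hy : ∀ k, 0 < y k) : 0 < coordProd y :=
  mul_pos (mul_pos (hy 0) (hy 1)) (hy 2)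

theorem simplex2_subset_ball3 : simplex2 ⊆ ball3 := fun _ hy => ⟨hy.1, hy.2.le⟩

variable {y : Fin 3 → ℝ}

theorem add_add_eq_one_of_mem_simplex2 (hy : y ∈ simplex2) (j : Fin 3) :
    y j + y (j + 1) + y (j + 2) = 1 := by
  fin_cases j <;> simp only [Fin.zero_eta, Fin.mk_one, Fin.reduceFinMk, Fin.isValue, zero_add,
    Fin.reduceAdd] <;> linarith [hy.2]

theorem add_le_one_of_mem_simplex2 (hy : y ∈ simplex2) {i j : Fin 3} (hij : i ≠ j) :
    y i + y j ≤ 1 := by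
  obtain rfl | rfl : j = i + 1 ∨ j = i + 2 := by revert i j; decide
  · linarith [add_add_eq_one_of_mem_simplex2 hy i, hy.1 (i + 2)]
  · linarith [add_add_eq_one_of_mem_simplex2 hy i, hy.1 (i + 1)]

theorem le_one_of_mem_simplex2 (hy : y ∈ simplex2) (j : Fin 3) : y j ≤ 1 := by
  linarith [add_le_one_of_mem_simplex2 hy (Fin3.add_one_ne j), hy.1 (j + 1)]

theorem isCompact_simplex2 : IsCompact simplex2 := by
  have hclosed : IsClosed simplex2 :=
    show IsClosed (Ici 0 ∩ {y : Fin 3 → ℝ | y 0 + y 1 + y 2 = 1}) from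
      isClosed_Ici.inter (isClosed_eq (by fun_prop) continuous_const)
  exact (isCompact_Icc (a := 0) (b := 1)).of_isClosed_subset hclosed
    fun y hy => ⟨hy.1, le_one_of_mem_simplex2 hy⟩

theorem coordProd_le_of_mem_simplex2 (hy : y ∈ simplex2) : coordProd y ≤ 1 / 27 :=
  calc coordProd y ≤ ((y 0 + y 1 + y 2) / 3) ^ 3 :=
        mul_mul_le_avg_pow_three (hy.1 0) (hy.1 1) (hy.1 2)
    _ = 1 / 27 := by rw [hy.2]; norm_num

theorem coordProd_center : coordProd ![1/3, 1/3, 1/3] = 1 / 27 := by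
  norm_num [coordProd, Matrix.cons_val_two]

theorem eq_center_of_mem_simplex2 (hy : y ∈ simplex2) (h : y 0 = y 1 ∧ y 1 = y 2) :
    y = ![1/3, 1/3, 1/3] := by
  have := hy.2
  ext k; fin_cases k <;> simp only [Fin.zero_eta, Fin.mk_one, Fin.reduceFinMk, Fin.isValue,
    Matrix.cons_val] <;> linarith [h.1, h.2]

theorem coordProd_eq_zero_iff : coordProd y = 0 ↔ ∃ k, y k = 0 := by
  simp [coordProd, Fin.exists_fin_succ, or_assoc]

theorem exists_mem_simplex2Edge (hy : y ∈ simplex2) (h0 : coordProd y = 0) (h1 : ∀ k, y k < 1) :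
    ∃ j, y ∈ simplex2Edge j := by
  obtain ⟨j, hj⟩ := coordProd_eq_zero_iff.1 h0
  have := add_add_eq_one_of_mem_simplex2 hy j
  exact ⟨j, hy, hj, by linarith [h1 (j + 2)], by linarith [h1 (j + 1)]⟩

end Simplex

/-- Indices are taken in `Fin 3`, i.e. cyclically, so `R y i = y i * growthFactor F y i` encodes
the three coordinate formulas of `R_H` at once. -/
def growthFactor (F : (Fin 3 → ℝ) → Fin 3 → ℝ) (y : Fin 3 → ℝ) (i : Fin 3) : ℝ :=
  1 + y (i + 1) * F y i - y (i + 2) * F y (i + 2)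

structure IsZeroSumReplicator (F R : (Fin 3 → ℝ) → Fin 3 → ℝ) : Prop where
  apply_eq : ∀ y i, R y i = y i * growthFactor F y i
  pos : ∀ y ∈ simplex2, ∀ k, 0 < F y k
  le_one : ∀ y ∈ simplex2, ∀ k, F y k ≤ 1

namespace IsZeroSumReplicator

variable {F R : (Fin 3 → ℝ) → Fin 3 → ℝ} {y : Fin 3 → ℝ}

theorem growthFactor_mem_Icc (hR : IsZeroSumReplicator F R) (hy : y ∈ simplex2) (i : Fin 3) :
    growthFactor F y i ∈ Icc (1 - y (i + 2)) (1 + y (i + 1)) := by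
  have hF0 := hR.pos y hy
  have hF1 := hR.le_one y hy
  constructor <;> unfold growthFactor <;>
    nlinarith [mul_nonneg (hy.1 (i + 1)) (hF0 i).le, mul_nonneg (hy.1 (i + 2)) (hF0 (i + 2)).le,
      mul_le_of_le_one_right (hy.1 (i + 1)) (hF1 i),
      mul_le_of_le_one_right (hy.1 (i + 2)) (hF1 (i + 2))]

theorem growthFactor_pos (hR : IsZeroSumReplicator F R) (hy : y ∈ posSimplex2) (i : Fin 3) :
    0 < growthFactor F y i := by
  have := add_le_one_of_mem_simplex2 hy.1 (Fin3.add_two_ne i).symm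
  linarith [(hR.growthFactor_mem_Icc hy.1 i).1, hy.2 i]

theorem mapsTo_simplex2 (hR : IsZeroSumReplicator F R) : MapsTo R simplex2 simplex2 := by
  intro y hy
  refine ⟨fun k => ?_, ?_⟩
  · rw [hR.apply_eq]
    exact mul_nonneg (hy.1 k)
      (by linarith [(hR.growthFactor_mem_Icc hy k).1, le_one_of_mem_simplex2 hy (k + 2)])
  · simp only [Fin.isValue, hR.apply_eq, growthFactor, zero_add, Fin.reduceAdd]
    linear_combination hy.2

theorem mapsTo_posSimplex2 (hR : IsZeroSumReplicator F R) : MapsTo R posSimplex2 posSimplex2 :=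
  fun y hy => ⟨hR.mapsTo_simplex2 hy.1, fun k => by
    rw [hR.apply_eq]; exact mul_pos (hy.2 k) (hR.growthFactor_pos hy k)⟩

theorem coordProd_apply_lt (hR : IsZeroSumReplicator F R)
    (hsim : ∀ y ∈ simplex2, ∀ i j, F y j ≤ F y i ↔ y j ≤ y i) (hy : y ∈ posSimplex2)
    (hc : y ≠ ![1/3, 1/3, 1/3]) : coordProd (R y) < coordProd y := by
  have hcyc := cyclic_sum_neg (f := F y) (g := y) (fun i j => hsim y hy.1 j i)
    fun h => hc (eq_center_of_mem_simplex2 hy.1 h)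
  have hg := hR.growthFactor_pos hy
  have hprod : growthFactor F y 0 * growthFactor F y 1 * growthFactor F y 2 < 1 := by
    refine (mul_mul_le_avg_pow_three (hg 0).le (hg 1).le (hg 2).le).trans_lt
      (pow_lt_one₀ (by linarith [hg 0, hg 1, hg 2]) ?_ three_ne_zero)
    simp only [growthFactor, Fin.isValue, zero_add, Fin.reduceAdd]
    linarith
  have hxi : coordProd (R y) =
      coordProd y * (growthFactor F y 0 * growthFactor F y 1 * growthFactor F y 2) := by
    simp only [coordProd, hR.apply_eq]; ring
  rw [hxi]
  exact mul_lt_of_lt_one_right (coordProd_pos hy.2) hprod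

theorem continuousOn (hR : IsZeroSumReplicator F R) (hF : ContinuousOn F simplex2) :
    ContinuousOn R simplex2 := by
  have hFi : ∀ i, ContinuousOn (fun y => F y i) simplex2 := fun i =>
    (continuous_apply i).comp_continuousOn hF
  refine continuousOn_pi.2 fun i => ?_
  simp only [hR.apply_eq, growthFactor]
  fun_prop

theorem apply_le_two_mul (hR : IsZeroSumReplicator F R) (hy : y ∈ simplex2) (i : Fin 3) :
    R y i ≤ 2 * y i := by
  rw [hR.apply_eq, mul_comm 2]
  exact mul_le_mul_of_nonneg_left
    (by linarith [(hR.growthFactor_mem_Icc hy i).2, le_one_of_mem_simplex2 hy (i + 1)]) (hy.1 i)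

theorem one_sub_apply_le (hR : IsZeroSumReplicator F R) (hy : y ∈ simplex2) (j : Fin 3) :
    1 - R y j ≤ 2 * (1 - y j) := by
  have hRy := add_add_eq_one_of_mem_simplex2 (hR.mapsTo_simplex2 hy) j
  linarith [add_add_eq_one_of_mem_simplex2 hy j, hR.apply_le_two_mul hy (j + 1),
    hR.apply_le_two_mul hy (j + 2)]

theorem eq_of_lt_apply_of_lt (hR : IsZeroSumReplicator F R) (hy : y ∈ simplex2) {ε : ℝ}
    (hε : 3 * ε ≤ 1) {j k : Fin 3} (hj : 1 - ε < y j) (hk : 1 - ε < R y k) : k = j := by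
  by_contra hkj
  linarith [add_le_one_of_mem_simplex2 (hR.mapsTo_simplex2 hy) hkj, hR.one_sub_apply_le hy j]

theorem mul_le_apply_add_two (hR : IsZeroSumReplicator F R) (hy : y ∈ simplex2) {δ : ℝ}
    (hδ : ∀ k, δ ≤ F y k) {j : Fin 3} (hj : 1 - δ / 6 ≤ y j) :
    (1 + δ / 2) * y (j + 2) ≤ R y (j + 2) := by
  rw [hR.apply_eq, mul_comm]
  refine mul_le_mul_of_nonneg_left ?_ (hy.1 _)
  have hj1 : y (j + 1) ≤ δ / 6 := by
    linarith [add_le_one_of_mem_simplex2 hy (Fin3.add_one_ne j).symm]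
  have hδ0 : 0 ≤ δ := by linarith [le_one_of_mem_simplex2 hy j]
  have hδ1 : δ ≤ 1 := (hδ j).trans (hR.le_one y hy j)
  have h1 : (1 - δ / 6) * δ ≤ y j * F y (j + 2) :=
    mul_le_mul (by linarith) (hδ _) hδ0 (hy.1 j)
  have h2 : y (j + 1) * F y (j + 1) ≤ δ / 6 :=
    (mul_le_of_le_one_right (hy.1 _) (hR.le_one y hy _)).trans hj1
  simp only [growthFactor, Fin3.add_two_add_one, Fin3.add_two_add_two]
  nlinarith [mul_nonneg hδ0 (by linarith : 0 ≤ 2 - δ)]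

theorem mapsTo_simplex2Edge (hR : IsZeroSumReplicator F R) (j : Fin 3) :
    MapsTo R (simplex2Edge j) (simplex2Edge j) := by
  rintro y ⟨hy, hj, hj1, hj2⟩
  have hFj1 := hR.pos y hy (j + 1)
  have hyj1 : y (j + 1) < 1 := by linarith [add_add_eq_one_of_mem_simplex2 hy j]
  refine ⟨hR.mapsTo_simplex2 hy, by rw [hR.apply_eq, hj, zero_mul], ?_, ?_⟩
  · rw [hR.apply_eq]
    refine mul_pos hj1 ?_
    simp only [growthFactor, Fin3.add_one_add_one, Fin3.add_one_add_two, hj, zero_mul]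
    nlinarith [mul_pos hj2 hFj1]
  · rw [hR.apply_eq]
    refine mul_pos hj2 ?_
    simp only [growthFactor, Fin3.add_two_add_one, Fin3.add_two_add_two, hj, zero_mul]
    nlinarith [mul_le_of_le_one_right hj1.le (hR.le_one y hy (j + 1))]

theorem lt_apply_of_mem_simplex2Edge (hR : IsZeroSumReplicator F R) {j : Fin 3}
    (hy : y ∈ simplex2Edge j) : y (j + 1) < R y (j + 1) := by
  obtain ⟨hy, hj, hj1, hj2⟩ := hy
  rw [hR.apply_eq]
  simp only [growthFactor, Fin3.add_one_add_one, Fin3.add_one_add_two, hj, zero_mul]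
  nlinarith [mul_pos (mul_pos hj1 hj2) (hR.pos y hy (j + 1))]

theorem mapsTo_posSimplex2_diff_center (hR : IsZeroSumReplicator F R)
    (hsim : ∀ y ∈ simplex2, ∀ i j, F y j ≤ F y i ↔ y j ≤ y i) :
    MapsTo R (posSimplex2 \ {![1/3, 1/3, 1/3]}) (posSimplex2 \ {![1/3, 1/3, 1/3]}) :=
  fun y ⟨hy, hc⟩ => ⟨hR.mapsTo_posSimplex2 hy, fun hRc => by
    have := hR.coordProd_apply_lt hsim hy hc
    rw [mem_singleton_iff.1 hRc, coordProd_center] at this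
    linarith [coordProd_le_of_mem_simplex2 hy.1]⟩

theorem tendsto_coordProd_iterate (hR : IsZeroSumReplicator F R)
    (hsim : ∀ y ∈ simplex2, ∀ i j, F y j ≤ F y i ↔ y j ≤ y i) (hF : ContinuousOn F simplex2)
    {x : Fin 3 → ℝ} (hx : x ∈ posSimplex2 \ {![1/3, 1/3, 1/3]}) :
    Tendsto (fun n => coordProd (R^[n] x)) atTop (𝓝 0) := by
  have horbit := fun n => (hR.mapsTo_posSimplex2_diff_center hsim).iterate n hx
  have hS : ∀ n, R^[n] x ∈ simplex2 := fun n => (horbit n).1.1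
  have hdec : ∀ n, coordProd (R^[n + 1] x) < coordProd (R^[n] x) := fun n => by
    rw [iterate_succ_apply']
    exact hR.coordProd_apply_lt hsim (horbit n).1 (horbit n).2
  have hbdd : BddBelow (range fun n => coordProd (R^[n] x)) :=
    ⟨0, by rintro _ ⟨n, rfl⟩; exact (coordProd_pos (horbit n).1.2).le⟩
  set L := ⨅ n, coordProd (R^[n] x)
  have hL : Tendsto (fun n => coordProd (R^[n] x)) atTop (𝓝 L) :=
    tendsto_atTop_ciInf (antitone_nat_of_succ_le fun n => (hdec n).le) hbdd
  suffices hL0 : L = 0 by rwa [hL0] at hL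
  by_contra hL0
  obtain ⟨p, -, φ, hφ, hp⟩ := isCompact_simplex2.tendsto_subseq hS
  have hpΩ : p ∈ subseqLimits (R^[·] x) := ⟨φ, hφ, hp⟩
  have hpS := subseqLimits_subset_of_isClosed isCompact_simplex2.isClosed hS hpΩ
  have hpL : coordProd p = L :=
    apply_eq_of_mem_subseqLimits continuous_coordProd.continuousAt hL hpΩ
  have hRpL : coordProd (R p) = L :=
    apply_eq_of_mem_subseqLimits continuous_coordProd.continuousAt hL
      (apply_mem_subseqLimits_iterate isCompact_simplex2.isClosed (hR.continuousOn hF) hS hpΩ)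
  have hppos : ∀ k, 0 < p k := fun k =>
    (hpS.1 k).lt_of_ne fun hk => hL0 (hpL ▸ coordProd_eq_zero_iff.2 ⟨k, hk.symm⟩)
  have hpc : p ≠ ![1/3, 1/3, 1/3] := fun hpc => by
    have : L < coordProd x := (ciInf_le hbdd 1).trans_lt (hdec 0)
    rw [← hpL, hpc, coordProd_center] at this
    linarith [coordProd_le_of_mem_simplex2 hx.1.1]
  exact (hR.coordProd_apply_lt hsim ⟨hpS, hppos⟩ hpc).ne (hRpL.trans hpL.symm)

theorem subseqLimits_iterate_subset (hR : IsZeroSumReplicator F R)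
    (hsim : ∀ y ∈ simplex2, ∀ i j, F y j ≤ F y i ↔ y j ≤ y i) (hF : ContinuousOn F simplex2)
    {x : Fin 3 → ℝ} (hx : x ∈ posSimplex2 \ {![1/3, 1/3, 1/3]}) :
    subseqLimits (R^[·] x) ⊆ {y ∈ simplex2 | coordProd y = 0} := fun _ hp =>
  ⟨subseqLimits_subset_of_isClosed isCompact_simplex2.isClosed
      (fun n => hR.mapsTo_simplex2.iterate n hx.1.1) hp,
    apply_eq_of_mem_subseqLimits continuous_coordProd.continuousAt
      (hR.tendsto_coordProd_iterate hsim hF hx) hp⟩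

theorem exists_mem_subseqLimits_forall_lt_one (hR : IsZeroSumReplicator F R)
    (hF : ContinuousOn F simplex2) {x : Fin 3 → ℝ} (hx : x ∈ posSimplex2) :
    ∃ p ∈ subseqLimits (R^[·] x), ∀ k, p k < 1 := by
  have horbit := fun n => hR.mapsTo_posSimplex2.iterate n hx
  obtain ⟨δ, hδ, hδF⟩ := isCompact_simplex2.exists_pos_forall_le (f := F)
    (fun k => (continuous_apply k).comp_continuousOn hF) hR.pos
  have hδ1 : δ ≤ 1 := (hδF x hx.1 0).trans (hR.le_one x hx.1 0)
  by_contra! hvert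
  obtain ⟨N, hN⟩ := eventually_atTop.1 <| eventually_mem_of_subseqLimits_subset
    (U := ⋃ j, {y | 1 - δ / 6 < y j}) isCompact_simplex2 (fun n => (horbit n).1)
    (isOpen_iUnion fun j =>
      isOpen_lt (g := fun y : Fin 3 → ℝ => y j) continuous_const (continuous_apply j))
    fun p hp => by
      obtain ⟨j, hj⟩ := hvert p hp
      exact mem_iUnion.2 ⟨j, show 1 - δ / 6 < p j by linarith⟩
  obtain ⟨j, hj⟩ := mem_iUnion.1 (hN N le_rfl)
  -- The orbit cannot jump between neighbourhoods of distinct vertices, so it stays near `e j`.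
  have htrap : ∀ m, 1 - δ / 6 < R^[N + m] x j := by
    intro m
    induction m with
    | zero => exact hj
    | succ m ih =>
      obtain ⟨k, hk⟩ := mem_iUnion.1 (hN (N + m + 1) (by omega))
      rw [iterate_succ_apply'] at hk
      rw [← add_assoc, iterate_succ_apply']
      rwa [← hR.eq_of_lt_apply_of_lt (horbit (N + m)).1 (by linarith) ih hk]
  have hgrow : Tendsto (fun m => R^[N + m] x (j + 2)) atTop atTop :=
    tendsto_atTop_of_geom_le (c := 1 + δ / 2) ((horbit N).2 _) (by linarith) fun m => by
      rw [← add_assoc, iterate_succ_apply']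
      exact hR.mul_le_apply_add_two (horbit (N + m)).1 (hδF _ (horbit (N + m)).1) (htrap m).le
  obtain ⟨m, hm⟩ := (hgrow.eventually_gt_atTop 1).exists
  exact hm.not_ge (le_one_of_mem_simplex2 (horbit (N + m)).1 _)

theorem subseqLimits_iterate_infinite (hR : IsZeroSumReplicator F R)
    (hsim : ∀ y ∈ simplex2, ∀ i j, F y j ≤ F y i ↔ y j ≤ y i) (hF : ContinuousOn F simplex2)
    {x : Fin 3 → ℝ} (hx : x ∈ posSimplex2 \ {![1/3, 1/3, 1/3]}) :
    (subseqLimits (R^[·] x)).Infinite := by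
  obtain ⟨p, hpΩ, hp1⟩ := hR.exists_mem_subseqLimits_forall_lt_one hF hx.1
  obtain ⟨hpS, hp0⟩ := hR.subseqLimits_iterate_subset hsim hF hx hpΩ
  obtain ⟨j, hpj⟩ := exists_mem_simplex2Edge hpS hp0 hp1
  have hedge := fun n => (hR.mapsTo_simplex2Edge j).iterate n hpj
  have hmono : StrictMono fun n => R^[n] p (j + 1) := strictMono_nat_of_lt_succ fun n => by
    rw [iterate_succ_apply']
    exact hR.lt_apply_of_mem_simplex2Edge (hedge n)
  have hΩ : ∀ n, R^[n] p ∈ subseqLimits (R^[·] x) := by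
    intro n
    induction n with
    | zero => exact hpΩ
    | succ n ih =>
      rw [iterate_succ_apply']
      exact apply_mem_subseqLimits_iterate isCompact_simplex2.isClosed (hR.continuousOn hF)
        (fun n => hR.mapsTo_simplex2.iterate n hx.1.1) ih
  exact infinite_of_injective_forall_mem (fun a b h => hmono.injective (congrFun h (j + 1))) hΩ

end IsZeroSumReplicator

/-- every interior orbit of `R_H` other than the center approaches the
boundary of `S²`: `ξ(R_H^{(n)}(x)) → 0`, the omega-limit set is contained in the
boundary `{x ∈ S² : x₁x₂x₃ = 0}`, and the omega-limit set is infinite. -/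
theorem stmt_16
    (F R : (Fin 3 → ℝ) → (Fin 3 → ℝ))
    (hFdiff : ContDiffOn ℝ 1 F ball3)
    (hFsop : ∀ x ∈ ball3, ∀ i j, F x j ≤ F x i ↔ x j ≤ x i)
    (hFpos : ∀ x ∈ ball3, ∀ k, 0 < F x k ∧ F x k ≤ 1)
    (hR0 : ∀ x, R x 0 = x 0 * (1 + x 1 * F x 0 - x 2 * F x 2))
    (hR1 : ∀ x, R x 1 = x 1 * (1 + x 2 * F x 1 - x 0 * F x 0))
    (hR2 : ∀ x, R x 2 = x 2 * (1 + x 0 * F x 2 - x 1 * F x 1)) :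
    ∀ x ∈ simplex2, (∀ k, 0 < x k) → x ≠ ![1/3, 1/3, 1/3] →
      Tendsto (fun n => (R^[n] x) 0 * (R^[n] x) 1 * (R^[n] x) 2) atTop (𝓝 0) ∧
      {p | ∃ φ : ℕ → ℕ, StrictMono φ ∧ Tendsto (fun n => R^[φ n] x) atTop (𝓝 p)} ⊆
        {y ∈ simplex2 | y 0 * y 1 * y 2 = 0} ∧
      {p | ∃ φ : ℕ → ℕ, StrictMono φ ∧
        Tendsto (fun n => R^[φ n] x) atTop (𝓝 p)}.Infinite := by
  intro x hx hxpos hxc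
  have hR : IsZeroSumReplicator F R :=
    { apply_eq := fun y i => by fin_cases i <;> simp [growthFactor, hR0, hR1, hR2]
      pos := fun y hy k => (hFpos y (simplex2_subset_ball3 hy) k).1
      le_one := fun y hy k => (hFpos y (simplex2_subset_ball3 hy) k).2 }
  have hsim := fun y hy => hFsop y (simplex2_subset_ball3 hy)
  have hF := hFdiff.continuousOn.mono simplex2_subset_ball3
  have hx' : x ∈ posSimplex2 \ {![1/3, 1/3, 1/3]} := ⟨⟨hx, hxpos⟩, hxc⟩
  exact ⟨hR.tendsto_coordProd_iterate hsim hF hx', hR.subseqLimits_iterate_subset hsim hF hx',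
    hR.subseqLimits_iterate_infinite hsim hF hx'⟩
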